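/- arXiv:1311.2414 — 2 statements merged into one kernel-verified Lean document; each statement's English description precedes it below -/
import Mathlib

section
/- Let β > 0 and η ≠ 0, and define γ(ξ, q) = −(1/2)·ln[ ((δ − βq²)² + (ξ + q²/2)²) / η² ]. There exist real ξ and real q with q ≠ 0 (equivalently q² > 0 on the ellipse (δ − βq²)² + (q²/2 + ξ)² = η²) such that γ(ξ, q) > 0 if and only if δ > −|η|. -/
/-- With β > 0 and η ≠ 0 and γ(ξ,q) = −(1/2)ln[((δ−βq²)² + (ξ+q²/2)²)/η²], there exist
real ξ and nonzero real q with γ(ξ,q) > 0 if and only if δ > −|η|. -/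
theorem stmt4 (β δ η : ℝ) (hβ : 0 < β) (hη : η ≠ 0)
    (γ : ℝ → ℝ → ℝ)
    (hγ : ∀ ξ q : ℝ, γ ξ q
      = -(1 / 2) * Real.log (((δ - β * q ^ 2) ^ 2 + (ξ + q ^ 2 / 2) ^ 2) / η ^ 2)) :
    (∃ ξ q : ℝ, q ≠ 0 ∧ 0 < γ ξ q) ↔ -|η| < δ := by
  have hη2 : (0:ℝ) < η ^ 2 := by positivity
  constructor
  · rintro ⟨ξ, q, hq, hpos⟩
    rw [hγ] at hpos
    set r := ((δ - β * q ^ 2) ^ 2 + (ξ + q ^ 2 / 2) ^ 2) / η ^ 2 with hr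
    have hlog : Real.log r < 0 := by linarith
    have hr1 : r < 1 := by
      by_contra h
      push_neg at h
      have := Real.log_nonneg h
      linarith
    have hD : (δ - β * q ^ 2) ^ 2 + (ξ + q ^ 2 / 2) ^ 2 < η ^ 2 :=
      (div_lt_one hη2).mp hr1
    have hq2 : 0 < q ^ 2 := by positivity
    have hbq : 0 < β * q ^ 2 := by positivity
    nlinarith [sq_abs η, sq_nonneg (ξ + q ^ 2 / 2), sq_nonneg (δ - β * q ^ 2 + |η|),
      abs_nonneg η]
  · intro hδ
    have main : ∀ t : ℝ, 0 < t → δ - t ≠ 0 → (δ - t) ^ 2 < η ^ 2 →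
        ∃ ξ q : ℝ, q ≠ 0 ∧ 0 < γ ξ q := by
      intro t ht hne hlt
      have htβ : 0 < t / β := by positivity
      refine ⟨-(t / β) / 2, Real.sqrt (t / β), ne_of_gt (Real.sqrt_pos.mpr htβ), ?_⟩
      rw [hγ]
      have hq2 : Real.sqrt (t / β) ^ 2 = t / β := Real.sq_sqrt htβ.le
      rw [hq2]
      have h1 : β * (t / β) = t := by field_simp
      have h2 : -(t / β) / 2 + (t / β) / 2 = 0 := by ring
      rw [h1, h2]
      have hr0 : 0 < ((δ - t) ^ 2 + (0:ℝ) ^ 2) / η ^ 2 := by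
        have : 0 < (δ - t) ^ 2 := by positivity
        positivity
      have hr1 : ((δ - t) ^ 2 + (0:ℝ) ^ 2) / η ^ 2 < 1 := by
        rw [div_lt_one hη2]
        nlinarith
      have := Real.log_neg hr0 hr1
      linarith
    have habs : 0 < |η| := abs_pos.mpr hη
    rcases lt_or_ge δ |η| with hc | hc
    · refine main ((δ + |η|) / 2) (by linarith) ?_ ?_
      · intro h
        have : δ = |η| := by linarith [sub_eq_zero.mp h]
        linarith
      · nlinarith [sq_abs η]
    · refine main (δ + |η| / 2) (by linarith) ?_ ?_
      · intro h
        have : |η| = 0 := by linarith [sub_eq_zero.mp h]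
        linarith
      · nlinarith [sq_abs η]
end

section
/- Let β > 0 and η ≠ 0. The level set {(ξ, s) ∈ ℝ × ℝ : (δ − βs)² + (s/2 + ξ)² = η²} (with s playing the role of q²) is an ellipse in the (ξ, s)-plane, and it intersects the half-plane {s > 0} in two connected components that do not contain points with s = 0 if and only if δ > |η|. -/
/-- The level set {(ξ,s) : (δ − βs)² + (s/2 + ξ)² = η²} meets the half-plane {s > 0}
(yielding the two symmetric regions of unstable wavenumbers) while containing no points
with s ≤ 0, if and only if δ > |η|. -/
theorem stmt5 (β δ η : ℝ) (hβ : 0 < β) (hη : η ≠ 0) :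
    ((∃ p : ℝ × ℝ, (δ - β * p.2) ^ 2 + (p.2 / 2 + p.1) ^ 2 = η ^ 2 ∧ 0 < p.2) ∧
      (∀ p : ℝ × ℝ, (δ - β * p.2) ^ 2 + (p.2 / 2 + p.1) ^ 2 = η ^ 2 → p.2 ≠ 0)) ↔
    |η| < δ := by
  constructor
  · rintro ⟨⟨⟨ξ, s⟩, heq, hs⟩, hall⟩
    simp only at heq hs
    have hδ2 : η ^ 2 < δ ^ 2 := by
      by_contra hcon
      push_neg at hcon
      refine hall (Real.sqrt (η ^ 2 - δ ^ 2), 0) ?_ rfl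
      have h1 : Real.sqrt (η ^ 2 - δ ^ 2) ^ 2 = η ^ 2 - δ ^ 2 :=
        Real.sq_sqrt (by linarith)
      simp only
      nlinarith
    have hkey : (δ - β * s) ^ 2 ≤ η ^ 2 := by nlinarith [sq_nonneg (s / 2 + ξ)]
    have ha : |η| ^ 2 = η ^ 2 := sq_abs η
    have ha0 : 0 ≤ |η| := abs_nonneg η
    -- δ > -|η|
    have h1 : -|η| < δ := by nlinarith [mul_pos hβ hs]
    nlinarith
  · intro h
    have hδ : 0 < δ := lt_of_le_of_lt (abs_nonneg η) h
    have hb : β ≠ 0 := ne_of_gt hβ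
    refine ⟨⟨(|η| - δ / (2 * β), δ / β), ?_, by positivity⟩, ?_⟩
    · simp only
      have ha : |η| ^ 2 = η ^ 2 := sq_abs η
      field_simp
      nlinarith
    · rintro ⟨ξ, s⟩ heq hs0
      simp only at heq hs0
      subst hs0
      have ha : |η| ^ 2 = η ^ 2 := sq_abs η
      nlinarith [sq_nonneg ξ, abs_nonneg η]
end
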